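/- arXiv:1609.04052 — 2 statements merged into one kernel-verified Lean document; each statement's English description precedes it below -/
import Mathlib

section
/- Let M be an A-D3 module with A a class of right R-modules closed under isomorphisms and direct summands. If M = M₁ ⊕ M₂ and f : M₁ → M₂ is a homomorphism with im(f) a direct summand of M₂ and im(f) ∈ A, then ker(f) is a direct summand of M₁. -/
universe u v

/-- A submodule is a direct summand if it has a complement. -/
def IsSummand {R : Type u} [Ring R] {M : Type v} [AddCommGroup M] [Module R M]
    (X : Submodule R M) : Prop :=
  ∃ Y : Submodule R M, IsCompl X Y

/-- A class of modules is closed under isomorphisms. -/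
def ClosedUnderIso (R : Type u) [Ring R]
    (A : (N : Type v) → [AddCommGroup N] → [Module R N] → Prop) : Prop :=
  ∀ (N₁ N₂ : Type v) [AddCommGroup N₁] [Module R N₁] [AddCommGroup N₂] [Module R N₂],
    (N₁ ≃ₗ[R] N₂) → A N₁ → A N₂

/-- A class of modules is closed under direct summands. -/
def ClosedUnderSummands (R : Type u) [Ring R]
    (A : (N : Type v) → [AddCommGroup N] → [Module R N] → Prop) : Prop :=
  ∀ (N : Type v) [AddCommGroup N] [Module R N] (X : Submodule R N),
    IsSummand X → A N → A X

/-- `M` is an `A`-C3 module. -/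
def IsAC3 (R : Type u) [Ring R]
    (A : (N : Type v) → [AddCommGroup N] → [Module R N] → Prop)
    (M : Type v) [AddCommGroup M] [Module R M] : Prop :=
  ∀ X Y : Submodule R M, A X → A Y → IsSummand X → IsSummand Y →
    X ⊓ Y = ⊥ → IsSummand (X ⊔ Y)

/-- `M` is an `A`-D3 module. -/
def IsAD3 (R : Type u) [Ring R]
    (A : (N : Type v) → [AddCommGroup N] → [Module R N] → Prop)
    (M : Type v) [AddCommGroup M] [Module R M] : Prop :=
  ∀ X Y : Submodule R M, IsSummand X → IsSummand Y →
    A (M ⧸ X) → A (M ⧸ Y) → X ⊔ Y = ⊤ → IsSummand (X ⊓ Y)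

/-- `N` is `K`-injective: every map from a submodule of `K` to `N` extends to `K`. -/
def IsInjectiveFor (R : Type u) [Ring R] (K : Type v) [AddCommGroup K] [Module R K]
    (N : Type v) [AddCommGroup N] [Module R N] : Prop :=
  ∀ (A : Submodule R K) (f : A →ₗ[R] N), ∃ g : K →ₗ[R] N, ∀ a : A, g a = f a

/-- `N` is `A`-injective: `N` is `K`-injective for every `K ∈ A`. -/
def IsAInjective (R : Type u) [Ring R]
    (A : (N : Type v) → [AddCommGroup N] → [Module R N] → Prop)
    (N : Type v) [AddCommGroup N] [Module R N] : Prop :=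
  ∀ (K : Type v) [AddCommGroup K] [Module R K], A K → IsInjectiveFor R K N

/-- `P` is `K`-projective: every map from `P` to a quotient of `K` lifts to `K`. -/
def IsProjectiveFor (R : Type u) [Ring R] (P : Type v) [AddCommGroup P] [Module R P]
    (K : Type v) [AddCommGroup K] [Module R K] : Prop :=
  ∀ (L : Type v) [AddCommGroup L] [Module R L] (g : K →ₗ[R] L) (f : P →ₗ[R] L),
    Function.Surjective g → ∃ h : P →ₗ[R] K, g ∘ₗ h = f

/-- `P` is `A`-projective: `P` is `K`-projective for every `K ∈ A`. -/
def IsAProjective (R : Type u) [Ring R]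
    (A : (N : Type v) → [AddCommGroup N] → [Module R N] → Prop)
    (P : Type v) [AddCommGroup P] [Module R P] : Prop :=
  ∀ (K : Type v) [AddCommGroup K] [Module R K], A K → IsProjectiveFor R P K

/-- An indecomposable module: nonzero, and its only direct summands are trivial. -/
def Indecomposable' (R : Type u) [Ring R] (M : Type v) [AddCommGroup M] [Module R M] : Prop :=
  Nontrivial M ∧ ∀ X : Submodule R M, IsSummand X → X = ⊥ ∨ X = ⊤

/-!
Write `M₂ = im f ⊕ C` and let `Γ = {x + f x | x ∈ M₁}` be the graph of `f` inside `M`. Both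
`Γ ⊕ C` and `M₁ ⊕ C` are complements of `im f` in `M`, so their quotients are isomorphic to
`im f ∈ A`; they sum to `M` because `f x = (x + f x) - x`, and they meet in `ker f ⊕ C`.
The `A`-D3 condition makes `ker f ⊕ C` a direct summand of `M`, hence `ker f` is one too, and a
direct summand of `M` lying in `M₁` is a direct summand of `M₁` by the modular law.
-/

open Submodule LinearMap

variable {R : Type u} [Ring R] {M : Type v} [AddCommGroup M] [Module R M]

lemma IsSummand.of_map_subtype {N : Submodule R M} {K : Submodule R N}
    (h : IsSummand (K.map N.subtype)) : IsSummand K := by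
  obtain ⟨L, hL⟩ := h
  refine ⟨L.comap N.subtype, ?_⟩
  simpa only [comap_map_eq_of_injective N.injective_subtype] using
    isCompl_comap_subtype_of_isCompl_of_le hL (map_subtype_le N K)

lemma IsAD3.isSummand_inf_of_isCompl
    {A : (N : Type v) → [AddCommGroup N] → [Module R N] → Prop} (hiso : ClosedUnderIso R A)
    (hM : IsAD3 R A M) {X Y N : Submodule R M} (hX : IsCompl X N) (hY : IsCompl Y N)
    (hN : A N) (hXY : X ⊔ Y = ⊤) : IsSummand (X ⊓ Y) :=
  hM X Y ⟨N, hX⟩ ⟨N, hY⟩ (hiso _ _ (quotientEquivOfIsCompl X N hX).symm hN)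
    (hiso _ _ (quotientEquivOfIsCompl Y N hY).symm hN) hXY

section InternalGraph

variable {M₁ M₂ : Submodule R M} (f : M₁ →ₗ[R] M₂)

def internalGraph : Submodule R M :=
  range (M₁.subtype + M₂.subtype ∘ₗ f)

lemma add_mem_internalGraph (x : M₁) : (x : M) + f x ∈ internalGraph f :=
  ⟨x, rfl⟩

lemma map_range_le_internalGraph_sup : (range f).map M₂.subtype ≤ internalGraph f ⊔ M₁ := by
  rintro _ ⟨_, ⟨x, rfl⟩, rfl⟩
  simpa using sub_mem (mem_sup_left (add_mem_internalGraph f x)) (mem_sup_right x.2)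

variable {f}

lemma isCompl_internalGraph (hcompl : IsCompl M₁ M₂) : IsCompl (internalGraph f) M₂ := by
  constructor
  · rw [disjoint_iff, eq_bot_iff]
    rintro _ ⟨⟨x, rfl⟩, hx⟩
    have hx₁ : (x : M) ∈ M₁ ⊓ M₂ := ⟨x.2, by simpa using sub_mem hx (f x).2⟩
    rw [hcompl.inf_eq_bot, mem_bot] at hx₁
    simp [(Subtype.ext hx₁ : x = 0)]
  · rw [codisjoint_iff, eq_top_iff, ← hcompl.sup_eq_top]
    refine sup_le (fun x hx => ?_) le_sup_right
    simpa using
      sub_mem (mem_sup_left (add_mem_internalGraph f ⟨x, hx⟩)) (mem_sup_right (f ⟨x, hx⟩).2)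

lemma internalGraph_inf_sup_map (hcompl : IsCompl M₁ M₂) {C : Submodule R M₂}
    (hC : Disjoint (range f) C) :
    internalGraph f ⊓ (M₁ ⊔ C.map M₂.subtype) = (ker f).map M₁.subtype := by
  apply le_antisymm
  · rintro _ ⟨⟨x, rfl⟩, hmem⟩
    obtain ⟨y, hy, _, ⟨c, hc, rfl⟩, hxy⟩ := mem_sup.mp hmem
    simp only [LinearMap.add_apply, subtype_apply, coe_comp, Function.comp_apply] at hxy
    have hxy_inf : (x : M) - y ∈ M₁ ⊓ M₂ := by
      refine ⟨sub_mem x.2 hy, ?_⟩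
      have hdiff : (x : M) - y = c - f x := by
        rw [sub_eq_sub_iff_add_eq_add, ← hxy]
        abel
      exact hdiff ▸ sub_mem c.2 (f x).2
    rw [hcompl.inf_eq_bot, mem_bot, sub_eq_zero] at hxy_inf
    have hcf : (c : M) = f x := by
      rw [← hxy_inf] at hxy
      exact add_left_cancel hxy
    have hfx : f x ∈ range f ⊓ C := ⟨mem_range_self f x, by rwa [← Subtype.ext hcf]⟩
    rw [hC.eq_bot, mem_bot] at hfx
    exact ⟨x, mem_ker.mpr hfx, by simp [hfx]⟩
  · rintro _ ⟨x, hx, rfl⟩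
    have hfx : (f x : M) = 0 := by simp [mem_ker.mp hx]
    exact ⟨by simpa [hfx] using add_mem_internalGraph f x, mem_sup_left x.2⟩

end InternalGraph

theorem AD3_ker_summand_general {R : Type u} [Ring R]
    (A : (N : Type v) → [AddCommGroup N] → [Module R N] → Prop)
    (hiso : ClosedUnderIso R A)
    (M : Type v) [AddCommGroup M] [Module R M] (hM : IsAD3 R A M)
    (M₁ M₂ : Submodule R M) (hcompl : IsCompl M₁ M₂)
    (f : M₁ →ₗ[R] M₂)
    (hrange : IsSummand (LinearMap.range f))
    (hrangeA : A (LinearMap.range f)) :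
    IsSummand (LinearMap.ker f) := by
  obtain ⟨C₀, hC₀⟩ := hrange
  set I := (range f).map M₂.subtype
  set C := C₀.map M₂.subtype
  have hCI : Disjoint C I := disjoint_map M₂.injective_subtype hC₀.disjoint.symm
  have hCI_sup : C ⊔ I = M₂ := by
    rw [← Submodule.map_sup, sup_comm, hC₀.sup_eq_top, Submodule.map_top, range_subtype]
  have isCompl_sup_C {N : Submodule R M} (hN : IsCompl N M₂) : IsCompl (N ⊔ C) I :=
    hCI.isCompl_sup_left_of_isCompl_sup_right
      ⟨hN.disjoint.mono_right hCI_sup.le, hN.codisjoint.mono_right hCI_sup.ge⟩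
  have hX : IsCompl (internalGraph f ⊔ C) I := isCompl_sup_C (isCompl_internalGraph hcompl)
  have hY : IsCompl (M₁ ⊔ C) I := isCompl_sup_C hcompl
  have hXY : (internalGraph f ⊔ C) ⊔ (M₁ ⊔ C) = ⊤ := by
    rw [eq_top_iff, ← hcompl.sup_eq_top]
    exact sup_le (le_sup_left.trans le_sup_right) (hCI_sup.ge.trans (sup_le
      (le_sup_right.trans le_sup_right)
      ((map_range_le_internalGraph_sup f).trans (sup_le_sup le_sup_left le_sup_left))))
  have hXY_inf : (internalGraph f ⊔ C) ⊓ (M₁ ⊔ C) = (ker f).map M₁.subtype ⊔ C := by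
    rw [sup_comm (internalGraph f), sup_inf_assoc_of_le _ le_sup_right,
      internalGraph_inf_sup_map hcompl hC₀.disjoint, sup_comm]
  have hI : A I := hiso _ _ (equivMapOfInjective _ M₂.injective_subtype _) hrangeA
  obtain ⟨D, hD⟩ := hXY_inf ▸ hM.isSummand_inf_of_isCompl hiso hX hY hI hXY
  have hKC : Disjoint ((ker f).map M₁.subtype) C :=
    hcompl.disjoint.mono (map_subtype_le _ _) (map_subtype_le _ _)
  exact IsSummand.of_map_subtype ⟨C ⊔ D, hKC.isCompl_sup_right_of_isCompl_sup_left hD⟩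

theorem AD3_ker_summand {R : Type u} [Ring R]
    (A : (N : Type v) → [AddCommGroup N] → [Module R N] → Prop)
    (hiso : ClosedUnderIso R A) (hsum : ClosedUnderSummands R A)
    (M : Type v) [AddCommGroup M] [Module R M] (hM : IsAD3 R A M)
    (M₁ M₂ : Submodule R M) (hcompl : IsCompl M₁ M₂)
    (f : M₁ →ₗ[R] M₂)
    (hrange : IsSummand (LinearMap.range f))
    (hrangeA : A (LinearMap.range f)) :
    IsSummand (LinearMap.ker f) :=
  AD3_ker_summand_general A hiso M hM M₁ M₂ hcompl f hrange hrangeA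
end

section
/- A regular ring R is a right V-ring if and only if every cyclic right R-module is simple-direct-injective. -/
universe u v

/-!
By Baer's criterion a simple module `S` is injective once every `f : I → S` on a left ideal
extends to `R`; with `K = ker f` this holds as soon as `I/K` is a direct summand of `R/K`.
Regularity gives an idempotent `e ∈ I` with `f e ≠ 0`; the kernel `m` of `r ↦ f (r e)` is a
maximal left ideal with `R/m ≅ S ≅ I/K`. If `K e ⊆ K`, the image of `R e` is a direct summand
of `R/K` isomorphic to `I/K`, so simple-direct-injectivity of `R/K` makes `I/K` a summand.
Otherwise `K + m = R`, and in `R/(K ∩ m) ≅ R/K × R/m` the summand `K/(K ∩ m) ≅ S` forces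
`(I ∩ m)/(K ∩ m) ≅ I/K` to be a summand, which transports back to `R/K`.
Conversely, an injective submodule is always a direct summand.
-/

open LinearMap Submodule

def IsSimpleDirectInjective (R : Type*) [Ring R] (M : Type*) [AddCommGroup M] [Module R M] :
    Prop :=
  ∀ A B : Submodule R M, IsSimpleModule R A → IsSimpleModule R B →
    Nonempty (A ≃ₗ[R] B) → IsSummand B → IsSummand A

section General

variable {R : Type*} [Ring R] {M T : Type*} [AddCommGroup M] [Module R M]
  [AddCommGroup T] [Module R T]

theorem isSummand_of_injective (A : Submodule R M) [Module.Injective R A] : IsSummand A := by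
  obtain ⟨π, hπ⟩ := Module.Injective.out A.subtype Subtype.val_injective LinearMap.id
  exact ⟨_, isCompl_of_proj hπ⟩

theorem exists_extend_of_sup_eq_top {N Y : Submodule R M} (g : N →ₗ[R] T) (hsup : N ⊔ Y = ⊤)
    (hg : ∀ x : N, (x : M) ∈ Y → g x = 0) : ∃ h : M →ₗ[R] T, ∀ x : N, h x = g x := by
  let p : M →ₗ.[R] T := LinearPMap.sup ⟨N, g⟩ ⟨Y, 0⟩ fun x y hxy => hg x (hxy ▸ y.2)
  refine ⟨p.toFun ∘ₗ (LinearEquiv.ofTop p.domain hsup).symm.toLinearMap, fun x => ?_⟩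
  exact (LinearPMap.sup_apply _ x 0 _ (by simp; rfl)).trans (add_zero _)

theorem exists_sup_eq_top_inf_le_of_isSummand_range {W J : Submodule R M}
    (h : IsSummand (range (W.mkQ ∘ₗ J.subtype))) : ∃ Y : Submodule R M, J ⊔ Y = ⊤ ∧ J ⊓ Y ≤ W := by
  obtain ⟨Z, hZ⟩ := h
  refine ⟨Z.comap W.mkQ, eq_top_iff.mpr fun x _ => ?_, fun x hx => ?_⟩
  · obtain ⟨_, ⟨j, rfl⟩, z, hz, hx⟩ := mem_sup.mp (hZ.codisjoint.eq_top ▸ mem_top (x := W.mkQ x))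
    rw [← add_sub_cancel (j : M) x]
    refine add_mem_sup j.2 ?_
    rwa [mem_comap, map_sub, ← hx, comp_apply, subtype_apply, mkQ_apply, add_sub_cancel_left]
  · have : W.mkQ x = 0 := (mem_bot R).mp <| hZ.disjoint.le_bot ⟨⟨⟨x, hx.1⟩, rfl⟩, hx.2⟩
    simpa using this

theorem nonempty_range_equiv_of_ker_eq {P : Type*} [AddCommGroup P] [Module R P]
    (φ : P →ₗ[R] M) {ρ : P →ₗ[R] T} (hρ : Function.Surjective ρ) (h : ker φ = ker ρ) :
    Nonempty (range φ ≃ₗ[R] T) :=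
  ⟨φ.quotKerEquivRange.symm ≪≫ₗ quotEquivOfEq _ _ h ≪≫ₗ ρ.quotKerEquivOfSurjective hρ⟩

theorem isCompl_map_mkQ_inf {P Q : Submodule R M} (h : P ⊔ Q = ⊤) :
    IsCompl (P.map (P ⊓ Q).mkQ) (Q.map (P ⊓ Q).mkQ) := by
  refine ⟨disjoint_def.mpr ?_, codisjoint_iff.mpr ?_⟩
  · rintro _ ⟨p, hp, rfl⟩ ⟨q, hq, hpq⟩
    rw [mkQ_apply, mkQ_apply, Submodule.Quotient.eq] at hpq
    have hpQ : p ∈ Q := by simpa using sub_mem hq hpq.2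
    simpa using And.intro hp hpQ
  · rw [← Submodule.map_sup, h, Submodule.map_top, range_mkQ]

theorem IsSimpleDirectInjective.isSummand_of_equiv {S : Type*} [AddCommGroup S] [Module R S]
    [IsSimpleModule R S] (h : IsSimpleDirectInjective R M) {A B : Submodule R M}
    (eA : A ≃ₗ[R] S) (eB : B ≃ₗ[R] S) (hB : IsSummand B) : IsSummand A :=
  h A B (IsSimpleModule.congr eA) (IsSimpleModule.congr eB) ⟨eA.trans eB.symm⟩ hB

theorem sup_inf_eq_top_of_inf_sup_eq_top {α : Type*} [Lattice α] [OrderTop α]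
    [IsModularLattice α] {K I m Y : α} (hKI : K ≤ I) (hKm : K ⊔ m = ⊤) (hY : I ⊓ m ⊔ Y = ⊤) :
    I ⊔ Y ⊓ m = ⊤ := by
  have hm : m = I ⊓ m ⊔ Y ⊓ m := by rw [← sup_inf_assoc_of_le Y inf_le_right, hY, top_inf_eq]
  refine top_le_iff.mp (hKm ▸ sup_le (hKI.trans le_sup_left) ?_)
  calc m = I ⊓ m ⊔ Y ⊓ m := hm
    _ ≤ I ⊔ Y ⊓ m := sup_le_sup_right inf_le_left _

theorem coe_mem_map_subtype_iff {N : Submodule R M} {p : Submodule R N} {x : N} :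
    (x : M) ∈ p.map N.subtype ↔ x ∈ p :=
  ⟨fun ⟨_, hy, hyx⟩ => Subtype.ext hyx ▸ hy, mem_map_of_mem⟩

theorem ker_mkQ_map_subtype_comp_subtype {N : Submodule R M} (p : Submodule R N) :
    ker ((p.map N.subtype).mkQ ∘ₗ N.subtype) = p := by
  rw [ker_comp, ker_mkQ, comap_map_eq_of_injective N.injective_subtype]

theorem exists_span_singleton_eq_top_quotient (W : Submodule R R) :
    ∃ m : R ⧸ W, Submodule.span R {m} = ⊤ := by
  refine ⟨W.mkQ 1, ?_⟩
  rw [LinearMap.span_singleton_eq_range, ← range_mkQ W]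
  congr 1
  exact LinearMap.ext_ring (one_smul R _)

end General

section Baer

variable {R : Type*} [Ring R] {S : Type*} [AddCommGroup S] [Module R S]

theorem exists_isIdempotentElem_apply_ne_zero (hreg : ∀ a : R, ∃ x : R, a * x * a = a)
    {I : Submodule R R} {f : I →ₗ[R] S} (hf : f ≠ 0) :
    ∃ e : I, IsIdempotentElem (e : R) ∧ f e ≠ 0 := by
  obtain ⟨a, ha⟩ : ∃ a : I, f a ≠ 0 := by
    by_contra! h
    exact hf (LinearMap.ext h)
  obtain ⟨x, hx⟩ := hreg a
  have hae : a = (a : R) • (x • a) := Subtype.ext <| by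
    show (a : R) = a * (x * a)
    rw [← mul_assoc, hx]
  refine ⟨x • a, ?_, fun he => ha ?_⟩
  · show x * a * (x * a) = x * a
    rw [mul_assoc, ← mul_assoc (a : R), hx]
  · rw [hae, map_smul, he, smul_zero]

variable [IsSimpleModule R S] {I : Submodule R R} (f : I →ₗ[R] S)

theorem isSummand_range_mkQ_comp_subtype_of_le_ker {e : I} (he : IsIdempotentElem (e : R))
    (hfe : f e ≠ 0) (hK : (ker f).map I.subtype ≤ ker (f ∘ₗ toSpanSingleton R I e))
    (hSDI : IsSimpleDirectInjective R (R ⧸ (ker f).map I.subtype)) :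
    IsSummand (range (((ker f).map I.subtype).mkQ ∘ₗ I.subtype)) := by
  set K := (ker f).map I.subtype
  set q := K.mkQ ∘ₗ I.subtype
  have hq : ker q = ker f := ker_mkQ_map_subtype_comp_subtype _
  have hf : Function.Surjective f := surjective_of_ne_zero fun h0 => hfe (by simp [h0])
  have hρ : Function.Surjective (f ∘ₗ toSpanSingleton R I e) :=
    surjective_of_ne_zero fun h0 => hfe (by simpa using LinearMap.congr_fun h0 1)
  obtain ⟨eA⟩ := nonempty_range_equiv_of_ker_eq q hf hq
  obtain ⟨eB⟩ := nonempty_range_equiv_of_ker_eq (q ∘ₗ toSpanSingleton R I e) hρ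
    (by rw [ker_comp (toSpanSingleton R I e) q, hq, ker_comp])
  refine hSDI.isSummand_of_equiv eA eB ?_
  -- Since `K e ⊆ K`, right multiplication by `e` descends to an idempotent of `R ⧸ K`
  -- whose range is the image of `R e`.
  let E := toSpanSingleton R R (e : R)
  have hE : K ≤ K.comap E := fun k hk => by
    have : f (k • e) = 0 := hK hk
    exact mem_map_of_mem (f := I.subtype) (mem_ker.mpr this)
  have hEbar : IsIdempotentElem (K.mapQ K E hE) := by
    ext
    simp [E, he.eq]
  have hrange : range (q ∘ₗ toSpanSingleton R I e) = range (K.mapQ K E hE) := by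
    rw [← range_comp_of_range_eq_top _ (range_mkQ K), mapQ_mkQ]
    rfl
  exact hrange ▸ ⟨_, hEbar.isCompl⟩

theorem exists_sup_eq_top_inf_le_of_not_le_ker {e : I} (hfe : f e ≠ 0)
    (hK : ¬(ker f).map I.subtype ≤ ker (f ∘ₗ toSpanSingleton R I e))
    (hSDI : IsSimpleDirectInjective R
      (R ⧸ (ker f).map I.subtype ⊓ ker (f ∘ₗ toSpanSingleton R I e))) :
    ∃ Y : Submodule R R, I ⊔ Y = ⊤ ∧ I ⊓ Y ≤ (ker f).map I.subtype := by
  set K := (ker f).map I.subtype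
  set ρ := f ∘ₗ toSpanSingleton R I e
  set m := ker ρ
  set W := K ⊓ m
  have hρ : Function.Surjective ρ :=
    surjective_of_ne_zero fun h0 => hfe (by simpa [ρ] using LinearMap.congr_fun h0 1)
  have hKm : K ⊔ m = ⊤ := by
    rw [sup_comm, ← codisjoint_iff]
    exact (isCoatom_ker_of_surjective hρ).not_le_iff_codisjoint.mp hK
  have hρK : Function.Surjective (ρ ∘ₗ K.subtype) :=
    surjective_of_ne_zero fun h0 => hK fun k hk => LinearMap.congr_fun h0 ⟨k, hk⟩
  have hfIm : Function.Surjective (f ∘ₗ inclusion (inf_le_left : I ⊓ m ≤ I)) := by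
    refine surjective_of_ne_zero fun h0 => hfe ?_
    obtain ⟨_, ⟨k, hk, rfl⟩, z, hz, hkz⟩ := mem_sup.mp (hKm ▸ mem_top : (e : R) ∈ K ⊔ m)
    have hzI : z ∈ I := by simpa [← hkz] using sub_mem e.2 k.2
    have hekz : e = k + ⟨z, hzI⟩ := Subtype.ext hkz.symm
    rw [hekz, map_add, mem_ker.mp hk, zero_add]
    exact LinearMap.congr_fun h0 ⟨z, hzI, hz⟩
  obtain ⟨eA⟩ := nonempty_range_equiv_of_ker_eq (W.mkQ ∘ₗ (I ⊓ m).subtype) hfIm <| by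
    ext ⟨x, hxI, hxm⟩
    simp only [mem_ker, comp_apply, subtype_apply, mkQ_apply, Submodule.Quotient.mk_eq_zero, W,
      mem_inf, K, coe_mem_map_subtype_iff (x := ⟨x, hxI⟩)]
    exact and_iff_left hxm
  obtain ⟨eB⟩ := nonempty_range_equiv_of_ker_eq (W.mkQ ∘ₗ K.subtype) hρK <| by
    rw [ker_comp, ker_comp, ker_mkQ, comap_inf, comap_subtype_self, top_inf_eq]
  have hB : IsSummand (range (W.mkQ ∘ₗ K.subtype)) :=
    ⟨_, by simpa only [range_comp, range_subtype] using isCompl_map_mkQ_inf hKm⟩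
  obtain ⟨Y, hY, hIY⟩ :=
    exists_sup_eq_top_inf_le_of_isSummand_range (hSDI.isSummand_of_equiv eA eB hB)
  refine ⟨Y ⊓ m, sup_inf_eq_top_of_inf_sup_eq_top (map_subtype_le _ _) hKm hY, ?_⟩
  calc I ⊓ (Y ⊓ m) = I ⊓ m ⊓ Y := by ac_rfl
    _ ≤ K := hIY.trans inf_le_left

theorem Module.Baer.of_isSimpleDirectInjective_quotient (hreg : ∀ a : R, ∃ x : R, a * x * a = a)
    (hSDI : ∀ W : Submodule R R, IsSimpleDirectInjective R (R ⧸ W)) : Module.Baer R S := by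
  intro I f
  rcases eq_or_ne f 0 with rfl | hf
  · exact ⟨0, fun _ _ => rfl⟩
  obtain ⟨e, he, hfe⟩ := exists_isIdempotentElem_apply_ne_zero hreg hf
  obtain ⟨Y, hIY, hY⟩ : ∃ Y : Submodule R R, I ⊔ Y = ⊤ ∧ I ⊓ Y ≤ (ker f).map I.subtype := by
    by_cases hK : (ker f).map I.subtype ≤ ker (f ∘ₗ toSpanSingleton R I e)
    · exact exists_sup_eq_top_inf_le_of_isSummand_range
        (isSummand_range_mkQ_comp_subtype_of_le_ker f he hfe hK (hSDI _))
    · exact exists_sup_eq_top_inf_le_of_not_le_ker f hfe hK (hSDI _)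
  obtain ⟨g, hg⟩ := exists_extend_of_sup_eq_top f hIY fun x hx =>
    coe_mem_map_subtype_iff.mp (hY ⟨x.2, hx⟩)
  exact ⟨g, fun x hx => hg ⟨x, hx⟩⟩

end Baer

theorem regular_Vring_iff_cyclic_SDI {R : Type u} [Ring R]
    (hreg : ∀ a : R, ∃ x : R, a * x * a = a) :
    (∀ (N : Type u) [AddCommGroup N] [Module R N], IsSimpleModule R N →
        Module.Injective R N) ↔
      (∀ (M : Type u) [AddCommGroup M] [Module R M],
        (∃ m : M, Submodule.span R {m} = ⊤) →
        ∀ A B : Submodule R M, IsSimpleModule R A → IsSimpleModule R B →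
          Nonempty (A ≃ₗ[R] B) → IsSummand B → IsSummand A) := by
  refine ⟨fun hV M _ _ _ A _ hA _ _ _ => ?_, fun hSDI N _ _ hN => ?_⟩
  · have := hV A hA
    exact isSummand_of_injective A
  · have := hN
    exact (Module.Baer.of_isSimpleDirectInjective_quotient hreg fun W =>
      hSDI _ (exists_span_singleton_eq_top_quotient W)).injective
end
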